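/- arXiv:1610.00571 — 3 statements merged into one kernel-verified Lean document; each statement's English description precedes it below -/
import Mathlib

section
/- Assume |V| ≥ 2. (i) For every V_0-selector g and every node v ∈ Θ_ℓ, the selector view ω_ℓ^g(v) is the singleton set consisting of the constant function s ↦ ? on 𝐓(v). (ii) For every non-critical index i ≤ ℓ−1 and all V_0-selectors g and h: if ω_{i+1}^g(v) = ω_{i+1}^h(v) for every v ∈ Θ_{i+1}, then ω_i^g(v) = ω_i^h(v) for every v ∈ Θ_i. -/
universe u v

/-- A leaf of a graph: a node with at most one neighbour. -/
def IsTreeLeaf {𝒱 : Type v} (T : SimpleGraph 𝒱) (x : 𝒱) : Prop :=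
  (T.neighborSet x).Subsingleton

/-- `(T, B)` is a tree decomposition of the graph with vertex set `V` and edge
relation `E`. -/
def IsTreeDecomp {V : Type u} {𝒱 : Type v} (E : V → V → Prop) (T : SimpleGraph 𝒱)
    (B : 𝒱 → Finset V) : Prop :=
  T.IsTree ∧ (∀ s t : V, E s t → ∃ x : 𝒱, s ∈ B x ∧ t ∈ B x) ∧
    ∀ s : V, (T.induce {x : 𝒱 | s ∈ B x}).Connected

/-- A nice (rooted) tree decomposition: every leaf has a singleton bag, every vertex
is the bag of some leaf, and along every tree edge one bag is obtained from the other
by adding exactly one vertex. -/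
def IsNiceTD {V : Type u} {𝒱 : Type v} [DecidableEq V] (E : V → V → Prop)
    (T : SimpleGraph 𝒱) (B : 𝒱 → Finset V) (root : 𝒱) : Prop :=
  IsTreeDecomp E T B ∧
  (∀ x : 𝒱, IsTreeLeaf T x → ∃ s : V, B x = {s}) ∧
  (∀ s : V, ∃ x : 𝒱, IsTreeLeaf T x ∧ B x = {s}) ∧
  ∀ x y : 𝒱, T.Adj x y →
    (∃ s : V, s ∉ B x ∧ B y = insert s (B x)) ∨ (∃ s : V, s ∉ B y ∧ B x = insert s (B y))

/-- A depth-first traversal `vs 1, …, vs ℓ` of the rooted tree `T`: it starts and ends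
at the root, consecutive nodes are adjacent, and every oriented edge of `T` occurs
exactly once among consecutive pairs. -/
structure IsDFT {𝒱 : Type v} (T : SimpleGraph 𝒱) (root : 𝒱) (ℓ : ℕ) (vs : ℕ → 𝒱) :
    Prop where
  one_le : 1 ≤ ℓ
  first : vs 1 = root
  last : vs ℓ = root
  adj : ∀ j : ℕ, 1 ≤ j → j < ℓ → T.Adj (vs j) (vs (j + 1))
  once : ∀ a b : 𝒱, T.Adj a b → ∃! j : ℕ, 1 ≤ j ∧ j < ℓ ∧ vs j = a ∧ vs (j + 1) = b

/-- `x` is an ancestor of `y` (w.r.t. `root`): `x` lies on the path from the root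
to `y`.  (In a tree the path between two nodes is unique.) -/
def Anc {𝒱 : Type v} (T : SimpleGraph 𝒱) (root x y : 𝒱) : Prop :=
  ∀ p : T.Walk root y, p.IsPath → x ∈ p.support

/-- `Θ_i`: the set of ancestors of `vs i`. -/
def Theta {𝒱 : Type v} (T : SimpleGraph 𝒱) (root : 𝒱) (vs : ℕ → 𝒱) (i : ℕ) : Set 𝒱 :=
  {x | Anc T root x (vs i)}

/-- `Θ_{≤ i} = ⋃_{1 ≤ j ≤ i} Θ_j`. -/
def ThetaLe {𝒱 : Type v} (T : SimpleGraph 𝒱) (root : 𝒱) (vs : ℕ → 𝒱) (i : ℕ) : Set 𝒱 :=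
  {x | ∃ j : ℕ, 1 ≤ j ∧ j ≤ i ∧ x ∈ Theta T root vs j}

/-- `Ψ_i = ⋃_{x ∈ Θ_i} B x`. -/
def Psi {V : Type u} {𝒱 : Type v} (T : SimpleGraph 𝒱) (root : 𝒱) (vs : ℕ → 𝒱)
    (B : 𝒱 → Finset V) (i : ℕ) : Set V :=
  {s | ∃ x ∈ Theta T root vs i, s ∈ B x}

/-- `Ψ_{≤ i} = ⋃_{1 ≤ j ≤ i} Ψ_j`. -/
def PsiLe {V : Type u} {𝒱 : Type v} (T : SimpleGraph 𝒱) (root : 𝒱) (vs : ℕ → 𝒱)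
    (B : 𝒱 → Finset V) (i : ℕ) : Set V :=
  {s | ∃ j : ℕ, 1 ≤ j ∧ j ≤ i ∧ s ∈ Psi T root vs B j}

/-- `x = n_i(w)`: `x` is the lowest ancestor of `w` belonging to `Θ_{≤ i}`. -/
def LowestAnc {𝒱 : Type v} (T : SimpleGraph 𝒱) (root : 𝒱) (vs : ℕ → 𝒱) (i : ℕ)
    (w x : 𝒱) : Prop :=
  Anc T root x w ∧ x ∈ ThetaLe T root vs i ∧
    ∀ y : 𝒱, Anc T root y w → y ∈ ThetaLe T root vs i → Anc T root y x

/-- `r = r(s)`: the node of `𝒯^s = {x | s ∈ B x}` closest to the root. -/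
def IsBagRoot {V : Type u} {𝒱 : Type v} (T : SimpleGraph 𝒱) (root : 𝒱)
    (B : 𝒱 → Finset V) (s : V) (r : 𝒱) : Prop :=
  s ∈ B r ∧ ∀ x : 𝒱, s ∈ B x → Anc T root r x

/-- `Ψ_{> i-1}(x) = {s ∈ Ψ_{> i-1} | n_i(s) = x}`, where `n_i(s) = n_i(r(s))`. -/
def PsiGtAt {V : Type u} {𝒱 : Type v} (T : SimpleGraph 𝒱) (root : 𝒱) (vs : ℕ → 𝒱)
    (B : 𝒱 → Finset V) (i : ℕ) (x : 𝒱) : Set V :=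
  {s | s ∉ PsiLe T root vs B (i - 1) ∧
    ∃ r : 𝒱, IsBagRoot T root B s r ∧ LowestAnc T root vs i r x}

/-- Possible values of a selector view: `?`, `⊤`, `⊥`, or an exit pair `(t, m)`. -/
inductive View (V : Type u) : Type u where
  | unk : View V
  | top : View V
  | bot : View V
  | exit : V → ℕ → View V

/-- The trace of the (partial) selector `f` from `s`: `iter f s n` is the `n`-th
vertex of the trace, if the trace is still defined at step `n`. -/
def iter {V : Type u} (f : V → Option V) (s : V) : ℕ → Option V
  | 0 => some s
  | n + 1 => (iter f s n).bind f

/-- `t` occurs infinitely often on the trace of `f` from `s`. -/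
def infOcc {V : Type u} (f : V → Option V) (s t : V) : Prop :=
  ∀ N : ℕ, ∃ n : ℕ, N ≤ n ∧ iter f s n = some t

/-- A parity game together with a tree decomposition and a depth-first traversal:
edge relation `E`, number of colors `C`, coloring `c`, set `V0` of vertices of
player `P₀` (`V1 = V0ᶜ`), tree `T` with bags `B`, depth-first traversal
`vs 1, …, vs len` and distinguished initial vertex `sigma`. -/
structure Setting (V : Type u) (𝒱 : Type v) where
  E : V → V → Prop
  C : ℕ
  c : V → ℕ
  V0 : Set V
  T : SimpleGraph 𝒱
  vs : ℕ → 𝒱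
  len : ℕ
  sigma : V
  B : 𝒱 → Finset V

namespace Setting

variable {V : Type u} {𝒱 : Type v} (S : Setting V 𝒱)

/-- The root of the tree is the first node of the depth-first traversal. -/
def root : 𝒱 := S.vs 1

/-- Standing assumptions: colors lie in `{1, …, C}`, `(T, B)` is a nice tree
decomposition of `(V, E)` rooted at `v₁` with bag `{σ}`, and `vs` is a
depth-first traversal of `T` of length `len`. -/
def Standing [DecidableEq V] : Prop :=
  (∀ s : V, 1 ≤ S.c s ∧ S.c s ≤ S.C) ∧
  IsNiceTD S.E S.T S.B S.root ∧
  IsDFT S.T S.root S.len S.vs ∧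
  S.B S.root = {S.sigma}

def theta (i : ℕ) : Set 𝒱 := Theta S.T S.root S.vs i

def psi (i : ℕ) : Set V := Psi S.T S.root S.vs S.B i

def psiLe (i : ℕ) : Set V := PsiLe S.T S.root S.vs S.B i

def psiGtAt (i : ℕ) (x : 𝒱) : Set V := PsiGtAt S.T S.root S.vs S.B i x

/-- The index `i` is critical: `Ψ_{>i} ⊊ Ψ_{>i-1}`. -/
def Crit (i : ℕ) : Prop := (S.psiLe i)ᶜ ⊂ (S.psiLe (i - 1))ᶜ

/-- `f` is a `W`-selector: a partial map with domain contained in `W` that follows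
edges of the game. -/
def Sel (W : Set V) (f : V → Option V) : Prop :=
  ∀ s t : V, f s = some t → s ∈ W ∧ S.E s t

/-- The (maximal) trace of the `V`-selector `f` from `s` is winning for player `P₀`:
either it is finite and its last vertex belongs to `V1 = V0ᶜ`, or it is infinite and
the maximal color occurring infinitely often along it is even. -/
def TraceWin (f : V → Option V) (s : V) : Prop :=
  (∃ (n : ℕ) (t : V), iter f s n = some t ∧ f t = none ∧ t ∉ S.V0) ∨
  ((∀ n : ℕ, iter f s n ≠ none) ∧
    ∃ m : ℕ, Even m ∧ (∃ t : V, infOcc f s t ∧ S.c t = m) ∧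
      ∀ t : V, infOcc f s t → S.c t ≤ m)

/-- The selector view `f_i(x, s)` of the `V`-selector `f`: `S.SelView f i x s w`
means `f_i(x, s) = w`. -/
def SelView (f : V → Option V) (i : ℕ) (x : 𝒱) (s : V) : View V → Prop := fun w =>
  match w with
  | View.unk =>
      (f s = none ∧ s ∉ S.psiGtAt i x) ∨ (∃ t : V, f s = some t ∧ t ∉ S.psiGtAt i x)
  | View.top =>
      (f s ≠ none ∨ s ∈ S.psiGtAt i x) ∧
      (∀ (n : ℕ) (t : V), 1 ≤ n → iter f s n = some t → t ∈ S.psiGtAt i x) ∧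
      S.TraceWin f s
  | View.bot =>
      (f s ≠ none ∨ s ∈ S.psiGtAt i x) ∧
      (∀ (n : ℕ) (t : V), 1 ≤ n → iter f s n = some t → t ∈ S.psiGtAt i x) ∧
      ¬ S.TraceWin f s
  | View.exit t m =>
      ∃ j : ℕ, 2 ≤ j ∧ iter f s j = some t ∧ t ∉ S.psiGtAt i x ∧
        (∀ (n : ℕ) (u : V), 1 ≤ n → n < j → iter f s n = some u → u ∈ S.psiGtAt i x) ∧
        (∃ (n : ℕ) (u : V), n < j ∧ iter f s n = some u ∧ S.c u = m) ∧
        (∀ (n : ℕ) (u : V), n < j → iter f s n = some u → S.c u ≤ m)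

/-- The selector views `f_i(x)` and `g_i(x)` coincide (as functions on the bag of `x`). -/
def ViewEq (f g : V → Option V) (i : ℕ) (x : 𝒱) : Prop :=
  ∀ s ∈ S.B x, ∀ w : View V, S.SelView f i x s w ↔ S.SelView g i x s w

/-- `f` is a `V`-selector extending the `V₀`-selector `g` (i.e. `g` is the
restriction of `f` to `V0`). -/
def Ext (f g : V → Option V) : Prop :=
  S.Sel Set.univ f ∧ (∀ s ∈ S.V0, g s = f s) ∧ ∀ s ∉ S.V0, g s = none

/-- The selector view `f_i(x)` of a `V`-selector, as a relation on the bag of `x`. -/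
def viewOn (f : V → Option V) (i : ℕ) (x : 𝒱) : V → View V → Prop :=
  fun s w => s ∈ S.B x ∧ S.SelView f i x s w

/-- `ω_i^g(x) = { f_i(x) | f is an extension of g }`. -/
def omega (g : V → Option V) (i : ℕ) (x : 𝒱) : Set (V → View V → Prop) :=
  {R | ∃ f : V → Option V, S.Ext f g ∧ R = S.viewOn f i x}

/-- The accessibility set `α_i^g`: vertices of `Ψ_i` reachable from `σ` along the
trace of some extension of `g`. -/
def alpha (g : V → Option V) (i : ℕ) : Set V :=
  {s | s ∈ S.psi i ∧ ∃ f : V → Option V, S.Ext f g ∧ ∃ k : ℕ, iter f S.sigma k = some s}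

/-- The set `B(g)_{x,y} ⊆ {⊥, ⊤}` (with `false` for `⊥` and `true` for `⊤`). -/
def Bsel (g : V → Option V) (x y : V) : Set Bool :=
  {b | (b = false ∧ (¬ S.E x y ∨ (x ∈ S.V0 ∧ g x = none) ∨
          (∃ z : V, g x = some z ∧ z ≠ y) ∨ (S.E x y ∧ x ∉ S.V0))) ∨
       (b = true ∧ (g x = some y ∨ (S.E x y ∧ x ∉ S.V0)))}

end Setting

/-!
At the last index every vertex already lies in `Ψ_{≤ ℓ-1}`, so every region `Ψ_{>ℓ-1}(x)` is
empty and every view is `?`.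

At a non-critical index `i` we have `Ψ_{≤ i} = Ψ_{≤ i-1}`, and the traversal moves along one
tree edge. If it moves up from `v_i`, the region of every node is unchanged, except that the
region of `v_i` becomes empty because its subtree has been traversed completely. If it moves
down from `a = v_i` to a child `b`, only the region of `a` changes: `Ψ_{>i-1}(a)` splits into
`Ψ_{>i}(a)` and `Ψ_{>i}(b)`. The two parts share no bag, so no edge joins them, and no edge
joins a vertex of `𝐓(a) ∖ 𝐓(b)` to the part of `b`. Hence a trace from `𝐓(a)` enters at most
one part and stays in it. So, given an extension of `g`, an extension of `h` with the same
view at `a` is glued from extensions of `h` that match its views at `a` and at `b` at index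
`i + 1`.
-/

section Trace

variable {V : Type*} {P : Set V} {f f' : V → Option V} {s t : V} {m n J : ℕ}

theorem iter_succ_eq_some :
    iter f s (n + 1) = some t ↔ ∃ u, iter f s n = some u ∧ f u = some t :=
  Option.bind_eq_some_iff

theorem exists_iter_eq_some_of_le (hmn : m ≤ n) (h : iter f s n = some t) :
    ∃ u, iter f s m = some u := by
  induction n, hmn using Nat.le_induction generalizing t with
  | base => exact ⟨t, h⟩
  | succ n _ ih =>
    obtain ⟨u, hu, -⟩ := iter_succ_eq_some.mp h
    exact ih hu

theorem iter_congr (h : ∀ n < J, ∀ u, iter f s n = some u → f u = f' u) :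
    ∀ n ≤ J, iter f s n = iter f' s n := by
  intro n hn
  induction n with
  | zero => rfl
  | succ n ih =>
    show (iter f s n).bind f = (iter f' s n).bind f'
    rw [← ih (by omega)]
    cases hu : iter f s n with
    | none => rfl
    | some u => exact h n (by omega) u hu

theorem eqOn_trace_of_stays (hfs : f s = f' s) (hP : ∀ u ∈ P, f u = f' u)
    (hstay : ∀ n u, 1 ≤ n → n < J → iter f s n = some u → u ∈ P) :
    ∀ n < J, ∀ u, iter f s n = some u → f u = f' u := by
  rintro (_ | n) hn u hu
  · cases hu
    exact hfs
  · exact hP u (hstay _ u (by omega) hn hu)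

def StaysIn (P : Set V) (f : V → Option V) (s : V) : Prop :=
  (f s ≠ none ∨ s ∈ P) ∧ ∀ n t, 1 ≤ n → iter f s n = some t → t ∈ P

def ExitsAt (P : Set V) (f : V → Option V) (s : V) (j : ℕ) (t : V) : Prop :=
  2 ≤ j ∧ iter f s j = some t ∧ t ∉ P ∧ ∀ n u, 1 ≤ n → n < j → iter f s n = some u → u ∈ P

theorem StaysIn.exists_first (h : StaysIn P f s) (hs : s ∉ P) : ∃ t ∈ P, f s = some t := by
  obtain ⟨t, ht⟩ := Option.ne_none_iff_exists'.mp (h.1.resolve_right hs)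
  exact ⟨t, h.2 1 t le_rfl ht, ht⟩

theorem ExitsAt.exists_first (h : ExitsAt P f s J t) : ∃ u ∈ P, f s = some u := by
  obtain ⟨hJ, hJt, -, hpre⟩ := h
  obtain ⟨u, hu⟩ := exists_iter_eq_some_of_le (by omega : 1 ≤ J) hJt
  exact ⟨u, hpre 1 u le_rfl (by omega) hu, hu⟩

theorem StaysIn.eqOn_trace (h : StaysIn P f s) (hfs : f s = f' s) (hP : ∀ u ∈ P, f u = f' u) :
    ∀ n u, iter f s n = some u → f u = f' u := fun n =>
  eqOn_trace_of_stays (J := n + 1) hfs hP (fun m u hm _ => h.2 m u hm) n n.lt_succ_self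

theorem StaysIn.of_eqOn_trace (h : StaysIn P f s) (heq : ∀ n u, iter f s n = some u → f u = f' u) :
    StaysIn P f' s := by
  have hit n : iter f s n = iter f' s n := iter_congr (fun m _ => heq m) n le_rfl
  refine ⟨?_, fun n t hn ht => h.2 n t hn (by rwa [hit])⟩
  rw [← heq 0 s rfl]
  exact h.1

end Trace

section RootedTree

open SimpleGraph

variable {𝒱 : Type*} {T : SimpleGraph 𝒱} {root a b x y z : 𝒱}

theorem anc_self (x : 𝒱) : Anc T root x x := fun p _ => p.end_mem_support

theorem anc_root (x : 𝒱) : Anc T root root x := fun p _ => p.start_mem_support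

theorem anc_iff_mem_support (hT : T.IsTree) {p : T.Walk root y} (hp : p.IsPath) :
    Anc T root x y ↔ x ∈ p.support :=
  ⟨fun h => h p hp, fun h _ hq => (hT.existsUnique_path root y).unique hq hp ▸ h⟩

theorem anc_trans (hxy : Anc T root x y) (hyz : Anc T root y z) : Anc T root x z := by
  classical
  intro p hp
  have hy := hyz p hp
  exact p.support_takeUntil_subset_support hy (hxy _ (hp.takeUntil hy))

theorem anc_antisymm (hT : T.IsTree) (hxy : Anc T root x y) (hyx : Anc T root y x) : x = y := by
  classical
  by_contra hne
  obtain ⟨p, hp, -⟩ := hT.existsUnique_path root y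
  have hx := hxy p hp
  have hy := hyx _ (hp.takeUntil hx)
  -- the path to `y` would be a proper prefix of itself
  have hlen := congrArg Walk.length
    ((hT.existsUnique_path root y).unique ((hp.takeUntil hx).takeUntil hy) hp)
  have := (p.takeUntil x hx).length_takeUntil_le_length hy
  have := Walk.length_takeUntil_lt_length hx hne
  omega

theorem anc_total (hT : T.IsTree) (hx : Anc T root x z) (hy : Anc T root y z) :
    Anc T root x y ∨ Anc T root y x := by
  classical
  obtain ⟨p, hp, -⟩ := hT.existsUnique_path root z
  have hprefix : ∀ a b (ha : a ∈ p.support) (hb : b ∈ p.support),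
      (p.takeUntil a ha).length ≤ (p.takeUntil b hb).length → Anc T root a b := by
    intro a b ha hb hle
    rw [anc_iff_mem_support hT (hp.takeUntil hb)]
    have := (p.takeUntil b hb).getVert_mem_support (p.takeUntil a ha).length
    rwa [Walk.getVert_takeUntil hb hle, Walk.getVert_length_takeUntil] at this
  exact (le_total _ _).imp (hprefix x y (hx p hp) (hy p hp)) (hprefix y x (hy p hp) (hx p hp))

theorem anc_or_anc_of_adj (hT : T.IsTree) (h : T.Adj x y) : Anc T root x y ∨ Anc T root y x := by
  obtain ⟨p, hp, -⟩ := hT.existsUnique_path root x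
  obtain ⟨q, hq, -⟩ := hT.existsUnique_path root y
  by_cases hxq : x ∈ q.support
  · exact .inl ((anc_iff_mem_support hT hq).mpr hxq)
  · exact .inr ((anc_iff_mem_support hT hp).mpr
      (hT.isAcyclic.mem_support_of_ne_mem_support_of_adj_of_isPath hp hq h hxq))

theorem anc_of_anc_child (hT : T.IsTree) (hxy : Anc T root x y) (had : T.Adj x y)
    (hz : Anc T root z y) (hzy : z ≠ y) : Anc T root z x := by
  obtain ⟨p, hp, -⟩ := hT.existsUnique_path root x
  obtain ⟨q, hq, -⟩ := hT.existsUnique_path root y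
  have hz := hz q hq
  rw [hT.isAcyclic.path_concat hp hq had (hxy q hq), Walk.support_concat,
    List.mem_append, List.mem_singleton] at hz
  exact (anc_iff_mem_support hT hp).mpr (hz.resolve_right hzy)

theorem not_anc_of_child (hT : T.IsTree) (hab : Anc T root a b) (had : T.Adj a b) :
    ¬ Anc T root b a := fun h => had.ne (anc_antisymm hT hab h)

theorem not_anc_root_of_child (hT : T.IsTree) (hab : Anc T root a b) (had : T.Adj a b) :
    ¬ Anc T root b root := fun h =>
  not_anc_of_child hT hab had (anc_trans h (anc_root a))

theorem eq_parent_of_adj_into_subtree (hT : T.IsTree) (hab : Anc T root a b) (had : T.Adj a b)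
    (hx : ¬ Anc T root b x) (hy : Anc T root b y) (hxy : T.Adj x y) : x = a ∧ y = b := by
  rcases anc_or_anc_of_adj hT hxy with h | h
  · obtain rfl : y = b := by
      by_contra hyb
      exact hx (anc_of_anc_child hT h hxy hy (Ne.symm hyb))
    exact ⟨anc_antisymm hT (anc_of_anc_child hT hab had h hxy.ne)
      (anc_of_anc_child hT h hxy hab had.ne), rfl⟩
  · exact absurd (anc_trans hy h) hx

theorem mem_bag_child {V : Type*} {B : 𝒱 → Finset V} {s : V} (hT : T.IsTree)
    (hconn : (T.induce {x | s ∈ B x}).Connected) (hab : Anc T root a b) (had : T.Adj a b)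
    (ha : s ∈ B a) (hz : s ∈ B z) (hbz : Anc T root b z) : s ∈ B b := by
  obtain ⟨W⟩ := hconn.preconnected ⟨a, ha⟩ ⟨z, hz⟩
  obtain ⟨d, -, hd₁, hd₂⟩ := W.exists_boundary_dart {y | ¬ Anc T root b y.1}
    (not_anc_of_child hT hab had) (not_not.mpr hbz)
  obtain ⟨-, hb⟩ := eq_parent_of_adj_into_subtree hT hab had hd₁ (not_not.mp hd₂) d.adj
  exact hb ▸ d.snd.2

theorem IsBagRoot.unique {V : Type*} {B : 𝒱 → Finset V} {s : V} {r r' : 𝒱} (hT : T.IsTree)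
    (hr : IsBagRoot T root B s r) (hr' : IsBagRoot T root B s r') : r = r' :=
  anc_antisymm hT (hr.2 r' hr'.1) (hr'.2 r hr.1)

end RootedTree

theorem exists_not_and_succ_of_le {Q : ℕ → Prop} {a b : ℕ} (hab : a ≤ b) (ha : ¬ Q a)
    (hb : Q b) : ∃ m, a ≤ m ∧ m < b ∧ ¬ Q m ∧ Q (m + 1) := by
  induction b, hab using Nat.le_induction with
  | base => exact absurd hb ha
  | succ b hab ih =>
    by_cases hQ : Q b
    · obtain ⟨m, h₁, h₂, h₃, h₄⟩ := ih hQ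
      exact ⟨m, h₁, by omega, h₃, h₄⟩
    · exact ⟨b, hab, by omega, hQ, hb⟩

structure IsDownStep {𝒱 : Type*} (T : SimpleGraph 𝒱) (root : 𝒱) (vs : ℕ → 𝒱) (i : ℕ) :
    Prop where
  one_le : 1 ≤ i
  anc : Anc T root (vs i) (vs (i + 1))
  adj : T.Adj (vs i) (vs (i + 1))
  fresh : ∀ y ∈ ThetaLe T root vs i, ¬ Anc T root (vs (i + 1)) y

namespace IsDFT

variable {𝒱 : Type*} {T : SimpleGraph 𝒱} {root a b : 𝒱} {ℓ : ℕ} {vs : ℕ → 𝒱} {i k₀ k₁ : ℕ}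

theorem exists_visit [Nontrivial 𝒱] (hT : T.IsTree) (hD : IsDFT T root ℓ vs) (z : 𝒱) :
    ∃ k, 1 ≤ k ∧ k < ℓ ∧ vs k = z := by
  obtain ⟨w, hw⟩ := hT.connected.preconnected.exists_adj_of_nontrivial z
  obtain ⟨k, ⟨hk1, hkℓ, hkz, -⟩, -⟩ := hD.once z w hw
  exact ⟨k, hk1, hkℓ, hkz⟩

theorem exists_entry (hT : T.IsTree) (hD : IsDFT T root ℓ vs) (hab : Anc T root a b)
    (had : T.Adj a b) (hk₀ : 1 ≤ k₀) (hk : k₀ ≤ k₁) (hk₁ : k₁ ≤ ℓ)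
    (h₀ : ¬ Anc T root b (vs k₀)) (h₁ : Anc T root b (vs k₁)) :
    ∃ m, k₀ ≤ m ∧ m < k₁ ∧ vs m = a ∧ vs (m + 1) = b := by
  obtain ⟨m, hm₀, hm₁, hm, hm'⟩ :=
    exists_not_and_succ_of_le (Q := fun k => Anc T root b (vs k)) hk h₀ h₁
  obtain ⟨ha, hb⟩ := eq_parent_of_adj_into_subtree hT hab had hm hm' (hD.adj m (by omega) (by omega))
  exact ⟨m, hm₀, hm₁, ha, hb⟩

theorem isDownStep (hT : T.IsTree) (hD : IsDFT T root ℓ vs) (h1 : 1 ≤ i) (hi : i < ℓ)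
    (hab : Anc T root (vs i) (vs (i + 1))) : IsDownStep T root vs i := by
  have had := hD.adj i h1 hi
  refine ⟨h1, hab, had, fun y ⟨k, hk1, hki, hyk⟩ hy => ?_⟩
  -- an earlier visit below `vs (i + 1)` would use the edge into it a second time
  have h₀ : ¬ Anc T root (vs (i + 1)) (vs 1) := by
    rw [hD.first]
    exact not_anc_root_of_child hT hab had
  obtain ⟨m, hm1, hmk, hm, hm'⟩ :=
    hD.exists_entry hT hab had le_rfl hk1 (by omega) h₀ (anc_trans hy hyk)
  have := (hD.once _ _ had).unique ⟨by omega, by omega, hm, hm'⟩ ⟨h1, hi, rfl, rfl⟩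
  omega

theorem not_anc_of_up (hT : T.IsTree) (hD : IsDFT T root ℓ vs) (h1 : 1 ≤ i) (hi : i < ℓ)
    (hba : Anc T root (vs (i + 1)) (vs i)) {k : ℕ} (hik : i < k) (hkℓ : k ≤ ℓ) :
    ¬ Anc T root (vs i) (vs k) := by
  intro hk
  have had := (hD.adj i h1 hi).symm
  -- the subtree of `vs i` was entered before step `i` and would be entered again after it
  have h₀ : ¬ Anc T root (vs i) (vs 1) := by
    rw [hD.first]
    exact not_anc_root_of_child hT hba had
  obtain ⟨m, hm1, hmi, hm, hm'⟩ :=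
    hD.exists_entry hT hba had le_rfl h1 hi.le h₀ (anc_self _)
  obtain ⟨m', hm'i, hm'k, hm'', hm'''⟩ :=
    hD.exists_entry hT hba had (by omega) hik hkℓ (not_anc_of_child hT hba had) hk
  have := (hD.once _ _ had).unique ⟨by omega, by omega, hm, hm'⟩ ⟨by omega, by omega, hm'', hm'''⟩
  omega

end IsDFT

section Regions

variable {V 𝒱 : Type*} {T : SimpleGraph 𝒱} {root : 𝒱} {vs : ℕ → 𝒱} {B : 𝒱 → Finset V}
  {ℓ i : ℕ} {x r : 𝒱} {s t u : V}

theorem mem_thetaLe_succ :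
    x ∈ ThetaLe T root vs (i + 1) ↔ x ∈ ThetaLe T root vs i ∨ Anc T root x (vs (i + 1)) := by
  constructor
  · rintro ⟨j, hj1, hj, hx⟩
    rcases Nat.lt_or_ge j (i + 1) with h | h
    · exact .inl ⟨j, hj1, by omega, hx⟩
    · obtain rfl : j = i + 1 := by omega
      exact .inr hx
  · rintro (⟨j, hj1, hj, hx⟩ | hx)
    · exact ⟨j, hj1, by omega, hx⟩
    · exact ⟨i + 1, by omega, le_rfl, hx⟩

theorem mem_psiLe {j k : ℕ} (hk1 : 1 ≤ k) (hkj : k ≤ j) (hs : s ∈ B (vs k)) :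
    s ∈ PsiLe T root vs B j :=
  ⟨k, hk1, hkj, vs k, anc_self _, hs⟩

theorem psiGtAt_eq_empty {j : ℕ} (h : ∀ s, s ∈ PsiLe T root vs B (j - 1)) :
    PsiGtAt T root vs B j x = ∅ :=
  Set.eq_empty_of_forall_notMem fun s hs => hs.1 (h s)

theorem disjoint_bag_psiGtAt (h1 : 1 ≤ i) (x : 𝒱) :
    Disjoint (B (vs i) : Set V) (PsiGtAt T root vs B (i + 1) x) :=
  Set.disjoint_left.mpr fun _ hs ht => ht.1 (mem_psiLe h1 (by omega) hs)

theorem psiGtAt_succ_of_up (h1 : 1 ≤ i) (hba : Anc T root (vs (i + 1)) (vs i))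
    (hψ : PsiLe T root vs B i = PsiLe T root vs B (i - 1)) (x : 𝒱) :
    PsiGtAt T root vs B (i + 1) x = PsiGtAt T root vs B i x := by
  have hθ : ThetaLe T root vs (i + 1) = ThetaLe T root vs i := by
    ext y
    rw [mem_thetaLe_succ]
    exact or_iff_left_of_imp fun hy => ⟨i, h1, le_rfl, anc_trans hy hba⟩
  simp only [PsiGtAt, LowestAnc, hθ, Nat.add_sub_cancel, hψ]

theorem psiGtAt_eq_empty_of_up [Nontrivial 𝒱] (hT : T.IsTree) (hD : IsDFT T root ℓ vs)
    (h1 : 1 ≤ i) (hi : i < ℓ) (hba : Anc T root (vs (i + 1)) (vs i))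
    (hψ : PsiLe T root vs B i = PsiLe T root vs B (i - 1)) :
    PsiGtAt T root vs B i (vs i) = ∅ := by
  refine Set.eq_empty_of_forall_notMem fun s ⟨hs, r, hr, hl⟩ => ?_
  obtain ⟨k, hk1, hkℓ, rfl⟩ := hD.exists_visit hT r
  by_cases hki : k ≤ i
  · have hr' := anc_antisymm hT (hl.2.2 _ (anc_self _) ⟨k, hk1, hki, anc_self _⟩) hl.1
    rw [hr'] at hr
    exact hs (hψ ▸ mem_psiLe h1 le_rfl hr.1)
  · exact hD.not_anc_of_up hT h1 hi hba (by omega) hkℓ.le hl.1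

namespace IsDownStep

theorem notMem_thetaLe (hd : IsDownStep T root vs i) : vs (i + 1) ∉ ThetaLe T root vs i :=
  fun h => hd.fresh _ h (anc_self _)

theorem mem_thetaLe_succ_iff (hd : IsDownStep T root vs i) (hT : T.IsTree) :
    x ∈ ThetaLe T root vs (i + 1) ↔ x = vs (i + 1) ∨ x ∈ ThetaLe T root vs i := by
  rw [mem_thetaLe_succ]
  constructor
  · rintro (hx | hx)
    · exact .inr hx
    · by_cases hxb : x = vs (i + 1)
      · exact .inl hxb
      · exact .inr ⟨i, hd.one_le, le_rfl, anc_of_anc_child hT hd.anc hd.adj hx hxb⟩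
  · rintro (rfl | hx)
    · exact .inr (anc_self _)
    · exact .inl hx

theorem lowestAnc_succ_iff (hd : IsDownStep T root vs i) (hT : T.IsTree) :
    LowestAnc T root vs (i + 1) r x ↔
      (Anc T root (vs (i + 1)) r ∧ x = vs (i + 1)) ∨
        (¬ Anc T root (vs (i + 1)) r ∧ LowestAnc T root vs i r x) := by
  constructor
  · rintro ⟨hxr, hx, hlow⟩
    by_cases hbr : Anc T root (vs (i + 1)) r
    · refine .inl ⟨hbr, ?_⟩
      have hbx := hlow _ hbr ((hd.mem_thetaLe_succ_iff hT).mpr (.inl rfl))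
      exact ((hd.mem_thetaLe_succ_iff hT).mp hx).resolve_right fun hx => hd.fresh x hx hbx
    · refine .inr ⟨hbr, hxr, ?_, fun y hy hyθ => hlow y hy (mem_thetaLe_succ.mpr (.inl hyθ))⟩
      refine ((hd.mem_thetaLe_succ_iff hT).mp hx).resolve_left ?_
      rintro rfl
      exact hbr hxr
  · rintro (⟨hbr, rfl⟩ | ⟨hbr, hxr, hx, hlow⟩)
    · refine ⟨hbr, (hd.mem_thetaLe_succ_iff hT).mpr (.inl rfl), fun y hyr hy => ?_⟩
      rcases (hd.mem_thetaLe_succ_iff hT).mp hy with rfl | hy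
      · exact anc_self _
      · exact (anc_total hT hyr hbr).resolve_right (hd.fresh y hy)
    · refine ⟨hxr, mem_thetaLe_succ.mpr (.inl hx), fun y hyr hy => ?_⟩
      rcases (hd.mem_thetaLe_succ_iff hT).mp hy with rfl | hy
      · exact absurd hyr hbr
      · exact hlow y hyr hy

theorem lowestAnc_of_anc_succ (hd : IsDownStep T root vs i) (hT : T.IsTree)
    (hbr : Anc T root (vs (i + 1)) r) : LowestAnc T root vs i r (vs i) := by
  refine ⟨anc_trans hd.anc hbr, ⟨i, hd.one_le, le_rfl, anc_self _⟩, fun y hyr hy => ?_⟩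
  have hyb := (anc_total hT hyr hbr).resolve_right (hd.fresh y hy)
  exact anc_of_anc_child hT hd.anc hd.adj hyb fun h => hd.notMem_thetaLe (h ▸ hy)

theorem psiGtAt_succ_eq (hd : IsDownStep T root vs i) (hT : T.IsTree)
    (hψ : PsiLe T root vs B i = PsiLe T root vs B (i - 1))
    (hx : x ∈ Theta T root vs i) (hxa : x ≠ vs i) :
    PsiGtAt T root vs B (i + 1) x = PsiGtAt T root vs B i x := by
  ext s
  simp only [PsiGtAt, Set.mem_ofPred_eq, Nat.add_sub_cancel, hψ, hd.lowestAnc_succ_iff hT]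
  refine and_congr_right fun _ => exists_congr fun r => and_congr_right fun _ => ⟨?_, ?_⟩
  · rintro (⟨-, rfl⟩ | ⟨-, hl⟩)
    · exact absurd hx (hd.fresh _ ⟨i, hd.one_le, le_rfl, anc_self _⟩)
    · exact hl
  · intro hl
    refine .inr ⟨fun hbr => hxa (anc_antisymm hT hx ?_), hl⟩
    exact hl.2.2 _ (anc_trans hd.anc hbr) ⟨i, hd.one_le, le_rfl, anc_self _⟩

theorem psiGtAt_eq_union (hd : IsDownStep T root vs i) (hT : T.IsTree)
    (hψ : PsiLe T root vs B i = PsiLe T root vs B (i - 1)) :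
    PsiGtAt T root vs B i (vs i) =
      PsiGtAt T root vs B (i + 1) (vs i) ∪ PsiGtAt T root vs B (i + 1) (vs (i + 1)) := by
  ext s
  simp only [PsiGtAt, Set.mem_union, Set.mem_ofPred_eq, Nat.add_sub_cancel, hψ, ← and_or_left,
    ← exists_or, hd.lowestAnc_succ_iff hT]
  refine and_congr_right fun _ => exists_congr fun r => and_congr_right fun _ => ⟨?_, ?_⟩
  · intro hl
    by_cases hbr : Anc T root (vs (i + 1)) r
    · exact .inr (.inl ⟨hbr, trivial⟩)
    · exact .inl (.inr ⟨hbr, hl⟩)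
  · rintro ((⟨-, h⟩ | ⟨-, hl⟩) | (⟨hbr, -⟩ | ⟨-, hl⟩))
    · exact absurd h hd.adj.ne
    · exact hl
    · exact hd.lowestAnc_of_anc_succ hT hbr
    · exact absurd hl.2.1 hd.notMem_thetaLe

theorem disjoint_psiGtAt (hd : IsDownStep T root vs i) (hT : T.IsTree) :
    Disjoint (PsiGtAt T root vs B (i + 1) (vs i)) (PsiGtAt T root vs B (i + 1) (vs (i + 1))) := by
  refine Set.disjoint_left.mpr fun s ⟨_, r, hr, hl⟩ ⟨_, r', hr', hl'⟩ => ?_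
  obtain rfl := hr.unique hT hr'
  rcases (hd.lowestAnc_succ_iff hT).mp hl with ⟨-, h⟩ | ⟨hbr, -⟩
  · exact hd.adj.ne h
  · exact hbr hl'.1

theorem notMem_bag_of_mem_psiGtAt (hd : IsDownStep T root vs i) (hT : T.IsTree)
    (hu : u ∈ PsiGtAt T root vs B (i + 1) (vs i))
    (ht : t ∈ PsiGtAt T root vs B (i + 1) (vs (i + 1))) {z : 𝒱} (huz : u ∈ B z) : t ∉ B z := by
  intro htz
  obtain ⟨hu, ru, hru, hlu⟩ := hu
  obtain ⟨-, rt, hrt, hlt⟩ := ht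
  obtain ⟨-, h⟩ | ⟨hbu, -⟩ := (hd.lowestAnc_succ_iff hT).mp hlu
  · exact hd.adj.ne h
  rcases anc_total hT (hru.2 z huz) (hrt.2 z htz) with hurt | hrtu
  · rcases anc_total hT hurt hlt.1 with hub | hbu'
    · -- `ru` is a strict ancestor of `vs (i + 1)`, so `u` lies in `Ψ_i`
      have hua := anc_of_anc_child hT hd.anc hd.adj hub fun h => hbu (h ▸ anc_self _)
      exact hu ⟨i, hd.one_le, by omega, ru, hua, hru.1⟩
    · exact hbu hbu'
  · exact hbu (anc_trans hlt.1 hrtu)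

theorem notMem_bag_of_notMem_bag_succ (hd : IsDownStep T root vs i) (hT : T.IsTree)
    (hconn : (T.induce {x | s ∈ B x}).Connected)
    (hs : s ∈ B (vs i)) (hsb : s ∉ B (vs (i + 1)))
    (ht : t ∈ PsiGtAt T root vs B (i + 1) (vs (i + 1))) {z : 𝒱} (hsz : s ∈ B z) : t ∉ B z := by
  intro htz
  obtain ⟨-, rt, hrt, hlt⟩ := ht
  exact hsb (mem_bag_child hT hconn hd.anc hd.adj hs hsz (anc_trans hlt.1 (hrt.2 z htz)))

end IsDownStep

theorem nontrivial_of_singleton_bags {V 𝒱 : Type*} [Nontrivial V] {B : 𝒱 → Finset V}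
    (hB : ∀ s, ∃ x, B x = {s}) : Nontrivial 𝒱 := by
  choose φ hφ using hB
  exact Function.Injective.nontrivial (f := φ) fun s t h =>
    Finset.singleton_injective ((hφ s).symm.trans (h ▸ hφ t))

end Regions

namespace Setting

variable {V 𝒱 : Type*} (S : Setting V 𝒱) {P A A' X Y : Set V} {f f' f₁ f₂ g h : V → Option V}
  {s t u : V} {w : View V} {i j J : ℕ} {x : 𝒱}

/-- The selector view of `f` at `s` relative to an arbitrary region `P`; the selector view
`f_i(x, s)` is the case `P = Ψ_{>i-1}(x)`. -/
def view (P : Set V) (f : V → Option V) (s : V) : View V → Prop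
  | .unk => (f s = none ∧ s ∉ P) ∨ ∃ t, f s = some t ∧ t ∉ P
  | .top => StaysIn P f s ∧ S.TraceWin f s
  | .bot => StaysIn P f s ∧ ¬ S.TraceWin f s
  | .exit t m => ∃ j, ExitsAt P f s j t ∧ (∃ n u, n < j ∧ iter f s n = some u ∧ S.c u = m) ∧
      ∀ n u, n < j → iter f s n = some u → S.c u ≤ m

/-- `ω_i^g(x)` is the case `P = Ψ_{>i-1}(x)`, `X = 𝐓(x)`. -/
def viewsOn (g : V → Option V) (P X : Set V) : Set (V → View V → Prop) :=
  {R | ∃ f, S.Ext f g ∧ R = fun s w => s ∈ X ∧ S.view P f s w}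

theorem omega_eq_viewsOn (g : V → Option V) (i : ℕ) (x : 𝒱) :
    S.omega g i x = S.viewsOn g (S.psiGtAt i x) (S.B x) := by
  have hview (f : V → Option V) :
      S.viewOn f i x = fun s w => s ∈ (S.B x : Set V) ∧ S.view (S.psiGtAt i x) f s w := by
    funext s w
    cases w <;> simp only [viewOn, SelView, view, StaysIn, ExitsAt, and_assoc, Finset.mem_coe]
  simp only [omega, viewsOn, hview]

theorem traceWin_congr (heq : ∀ n u, iter f s n = some u → f u = f' u) :
    S.TraceWin f s ↔ S.TraceWin f' s := by
  have hit : iter f' s = iter f s :=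
    funext fun n => (iter_congr (fun m _ => heq m) n le_rfl).symm
  simp only [TraceWin, infOcc, hit]
  refine or_congr_left (exists_congr fun n => exists_congr fun t => and_congr_right fun ht => ?_)
  rw [heq n t ht]

theorem view_unk_iff (hs : s ∉ P) : S.view P f s .unk ↔ ∀ t ∈ P, f s ≠ some t := by
  cases hfs : f s with
  | none => simp [view, hfs, hs]
  | some u =>
    simp only [view, hfs, reduceCtorEq, false_and, Option.some.injEq, exists_eq_left', false_or,
      ne_eq]
    exact ⟨fun hu t ht htu => hu (htu ▸ ht), fun h hu => h u hu rfl⟩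

theorem exists_first_of_view (hs : s ∉ P) (hv : S.view P f s w) (hw : w ≠ .unk) :
    ∃ t ∈ P, f s = some t := by
  cases w with
  | unk => exact absurd rfl hw
  | top => exact hv.1.exists_first hs
  | bot => exact hv.1.exists_first hs
  | exit t m => obtain ⟨j, hj, -⟩ := hv; exact hj.exists_first

theorem view_iff_eq_unk (hs : s ∉ P) (hstep : ∀ t ∈ P, f s ≠ some t) :
    S.view P f s w ↔ w = .unk := by
  refine ⟨fun hv => ?_, fun hw => hw ▸ (S.view_unk_iff hs).mpr hstep⟩
  by_contra hw
  obtain ⟨t, ht, hft⟩ := S.exists_first_of_view hs hv hw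
  exact hstep t ht hft

theorem view_of_view (hs : s ∉ P) (hP : ∀ u ∈ P, f u = f' u)
    (hstep : ∀ t ∈ P, f s = some t ↔ f' s = some t) (hv : S.view P f s w) : S.view P f' s w := by
  by_cases hw : w = .unk
  · subst hw
    exact (S.view_unk_iff hs).mpr fun t ht hft =>
      (S.view_unk_iff hs).mp hv t ht ((hstep t ht).mpr hft)
  obtain ⟨t, ht, hft⟩ := S.exists_first_of_view hs hv hw
  have hfs : f s = f' s := hft.trans ((hstep t ht).mp hft).symm
  cases w with
  | unk => exact absurd rfl hw
  | top =>
    have heq := hv.1.eqOn_trace hfs hP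
    exact ⟨hv.1.of_eqOn_trace heq, (S.traceWin_congr heq).mp hv.2⟩
  | bot =>
    have heq := hv.1.eqOn_trace hfs hP
    exact ⟨hv.1.of_eqOn_trace heq, fun hwin => hv.2 ((S.traceWin_congr heq).mpr hwin)⟩
  | exit t m =>
    obtain ⟨j, ⟨hj, hjt, htP, hpre⟩, hcol, hmax⟩ := hv
    have hit := iter_congr (eqOn_trace_of_stays hfs hP hpre)
    refine ⟨j, ⟨hj, hit j le_rfl ▸ hjt, htP, fun n u hn hnj hu => ?_⟩, ?_, fun n u hnj hu => ?_⟩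
    · exact hpre n u hn hnj (hit n hnj.le ▸ hu)
    · obtain ⟨n, u, hnj, hu, hcu⟩ := hcol
      exact ⟨n, u, hnj, hit n hnj.le ▸ hu, hcu⟩
    · exact hmax n u hnj (hit n hnj.le ▸ hu)

theorem view_congr (hs : s ∉ P) (hP : ∀ u ∈ P, f u = f' u)
    (hstep : ∀ t ∈ P, f s = some t ↔ f' s = some t) : S.view P f s w ↔ S.view P f' s w :=
  ⟨S.view_of_view hs hP hstep,
    S.view_of_view hs (fun u hu => (hP u hu).symm) fun t ht => (hstep t ht).symm⟩

theorem stays_left_of_stays_union (hf : S.Sel Set.univ f)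
    (hAA' : ∀ u ∈ A, ∀ t ∈ A', ¬ S.E u t)
    (hstay : ∀ n u, 1 ≤ n → n < J → iter f s n = some u → u ∈ A ∪ A')
    (hft : f s = some t) (ht : t ∈ A) :
    ∀ n u, 1 ≤ n → n < J → iter f s n = some u → u ∈ A := by
  intro n u hn
  induction n, hn using Nat.le_induction generalizing u with
  | base =>
    intro _ hu
    cases hft.symm.trans hu
    exact ht
  | succ n hn ih =>
    intro hnJ hu
    obtain ⟨u', hu', hfu'⟩ := iter_succ_eq_some.mp hu
    refine (hstay _ u (by omega) hnJ hu).resolve_right fun hA' => ?_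
    exact hAA' u' (ih u' (by omega) hu') u hA' (hf u' u hfu').2

theorem staysIn_union_iff (hf : S.Sel Set.univ f) (hAA' : ∀ u ∈ A, ∀ t ∈ A', ¬ S.E u t)
    (hA'A : ∀ u ∈ A', ∀ t ∈ A, ¬ S.E u t) (hs : s ∉ A ∪ A') :
    StaysIn (A ∪ A') f s ↔ StaysIn A f s ∨ StaysIn A' f s := by
  constructor
  · intro h
    obtain ⟨t, ht | ht, hft⟩ := h.exists_first hs
    · refine .inl ⟨.inl (by simp [hft]), fun n u hn => ?_⟩
      exact S.stays_left_of_stays_union (J := n + 1) hf hAA' (fun m u hm _ => h.2 m u hm) hft ht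
        n u hn n.lt_succ_self
    · refine .inr ⟨.inl (by simp [hft]), fun n u hn => ?_⟩
      exact S.stays_left_of_stays_union (J := n + 1) hf hA'A
        (fun m u hm _ hu => (h.2 m u hm hu).symm) hft ht n u hn n.lt_succ_self
  · rintro (h | h)
    · exact ⟨h.1.imp_right .inl, fun n u hn hu => .inl (h.2 n u hn hu)⟩
    · exact ⟨h.1.imp_right .inr, fun n u hn hu => .inr (h.2 n u hn hu)⟩

theorem notMem_of_exitsAt (hf : S.Sel Set.univ f) (hAA' : ∀ u ∈ A, ∀ t ∈ A', ¬ S.E u t)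
    (h : ExitsAt A f s j t) : t ∉ A' := by
  obtain ⟨hj, hjt, -, hpre⟩ := h
  obtain ⟨u, hu, hfu⟩ := iter_succ_eq_some.mp
    (show iter f s (j - 1 + 1) = some t by rwa [Nat.sub_add_cancel (by omega)])
  exact fun ht => hAA' u (hpre _ u (by omega) (by omega) hu) t ht (hf u t hfu).2

theorem exitsAt_union_iff (hf : S.Sel Set.univ f) (hAA' : ∀ u ∈ A, ∀ t ∈ A', ¬ S.E u t)
    (hA'A : ∀ u ∈ A', ∀ t ∈ A, ¬ S.E u t) :
    ExitsAt (A ∪ A') f s j t ↔ ExitsAt A f s j t ∨ ExitsAt A' f s j t := by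
  constructor
  · intro h
    obtain ⟨u, hu, hfu⟩ := h.exists_first
    obtain ⟨hj, hjt, ht, hpre⟩ := h
    rcases hu with hu | hu
    · exact .inl ⟨hj, hjt, fun h => ht (.inl h), S.stays_left_of_stays_union hf hAA' hpre hfu hu⟩
    · exact .inr ⟨hj, hjt, fun h => ht (.inr h), S.stays_left_of_stays_union hf hA'A
        (fun n u hn hnj hu => (hpre n u hn hnj hu).symm) hfu hu⟩
  · rintro (h | h)
    · exact ⟨h.1, h.2.1, fun ht => ht.elim h.2.2.1 (S.notMem_of_exitsAt hf hAA' h),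
        fun n u hn hnj hu => .inl (h.2.2.2 n u hn hnj hu)⟩
    · exact ⟨h.1, h.2.1, fun ht => ht.elim (S.notMem_of_exitsAt hf hA'A h) h.2.2.1,
        fun n u hn hnj hu => .inr (h.2.2.2 n u hn hnj hu)⟩

theorem view_union_unk (hs : s ∉ A ∪ A') :
    S.view (A ∪ A') f s .unk ↔ S.view A f s .unk ∧ S.view A' f s .unk := by
  rw [S.view_unk_iff hs, S.view_unk_iff fun h => hs (.inl h), S.view_unk_iff fun h => hs (.inr h)]
  exact ⟨fun h => ⟨fun t ht => h t (.inl ht), fun t ht => h t (.inr ht)⟩,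
    fun h t ht => ht.elim (h.1 t) (h.2 t)⟩

theorem view_union_of_ne_unk (hf : S.Sel Set.univ f) (hAA' : ∀ u ∈ A, ∀ t ∈ A', ¬ S.E u t)
    (hA'A : ∀ u ∈ A', ∀ t ∈ A, ¬ S.E u t) (hs : s ∉ A ∪ A') (hw : w ≠ .unk) :
    S.view (A ∪ A') f s w ↔ S.view A f s w ∨ S.view A' f s w := by
  cases w with
  | unk => exact absurd rfl hw
  | top => simp only [view, S.staysIn_union_iff hf hAA' hA'A hs, or_and_right]
  | bot => simp only [view, S.staysIn_union_iff hf hAA' hA'A hs, or_and_right]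
  | exit t m => simp only [view, S.exitsAt_union_iff hf hAA' hA'A, or_and_right, exists_or]

theorem view_union_congr (hf : S.Sel Set.univ f) (hf' : S.Sel Set.univ f')
    (hAA' : ∀ u ∈ A, ∀ t ∈ A', ¬ S.E u t) (hA'A : ∀ u ∈ A', ∀ t ∈ A, ¬ S.E u t)
    (hs : s ∉ A ∪ A') (hA : ∀ w, S.view A f s w ↔ S.view A f' s w)
    (hA' : ∀ w, S.view A' f s w ↔ S.view A' f' s w) :
    S.view (A ∪ A') f s w ↔ S.view (A ∪ A') f' s w := by
  by_cases hw : w = .unk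
  · subst hw
    rw [S.view_union_unk hs, S.view_union_unk hs, hA, hA']
  · rw [S.view_union_of_ne_unk hf hAA' hA'A hs hw, S.view_union_of_ne_unk hf' hAA' hA'A hs hw,
      hA, hA']

theorem exists_first_iff_of_view_iff (hs : s ∉ P) (h : ∀ w, S.view P f s w ↔ S.view P f' s w) :
    (∃ t ∈ P, f s = some t) ↔ ∃ t ∈ P, f' s = some t := by
  simpa only [S.view_unk_iff hs, not_forall, not_not, exists_prop] using (h .unk).not

theorem ext_self_of_sel (hg : S.Sel S.V0 g) : S.Ext g g :=
  ⟨fun s t hst => ⟨trivial, (hg s t hst).2⟩, fun _ _ => rfl,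
    fun s hs => Option.eq_none_iff_forall_ne_some.mpr fun t hst => hs (hg s t hst).1⟩

variable {S} in
theorem Ext.eq_some (hf : S.Ext f h) (hh : h s = some t) : f s = some t := by
  by_cases hs : s ∈ S.V0
  · rw [← hf.2.1 s hs, hh]
  · rw [hf.2.2 s hs] at hh
    cases hh

open Classical in
noncomputable def glue (A A' : Set V) (f₁ f₂ h : V → Option V) (u : V) : Option V :=
  if u ∈ A ∨ ∃ t ∈ A, f₁ u = some t then f₁ u
  else if u ∈ A' ∨ ∃ t ∈ A', f₂ u = some t then f₂ u
  else h u

variable {S} in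
theorem ext_glue (hf₁ : S.Ext f₁ h) (hf₂ : S.Ext f₂ h) : S.Ext (glue A A' f₁ f₂ h) h := by
  refine ⟨fun u t hu => ⟨trivial, ?_⟩, fun u hu => ?_, hf₁.2.2⟩
  · unfold glue at hu
    split_ifs at hu
    · exact (hf₁.1 u t hu).2
    · exact (hf₂.1 u t hu).2
    · exact (hf₁.1 u t (hf₁.eq_some hu)).2
  · unfold glue
    split_ifs
    · exact hf₁.2.1 u hu
    · exact hf₂.2.1 u hu
    · rfl

theorem glue_of_mem_left (hu : u ∈ A) : glue A A' f₁ f₂ h u = f₁ u :=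
  if_pos (.inl hu)

theorem glue_of_mem_right (hf₁ : S.Sel Set.univ f₁) (hdisj : Disjoint A A')
    (hA'A : ∀ u ∈ A', ∀ t ∈ A, ¬ S.E u t) (hu : u ∈ A') : glue A A' f₁ f₂ h u = f₂ u := by
  rw [glue, if_neg, if_pos (.inl hu)]
  rintro (hu' | ⟨t, ht, hft⟩)
  · exact Set.disjoint_left.mp hdisj hu' hu
  · exact hA'A u hu t ht (hf₁ u t hft).2

variable {S} in
theorem glue_eq_some_iff_left (hf₁ : S.Ext f₁ h) (hdisj : Disjoint A A') (hs : s ∉ A ∪ A')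
    (ht : t ∈ A) : f₁ s = some t ↔ glue A A' f₁ f₂ h s = some t := by
  by_cases h₁ : ∃ t ∈ A, f₁ s = some t
  · rw [glue, if_pos (.inr h₁)]
  rw [glue, if_neg (not_or.mpr ⟨fun h => hs (.inl h), h₁⟩)]
  refine iff_of_false (fun hft => h₁ ⟨t, ht, hft⟩) ?_
  split_ifs with h₂
  · rintro hft
    obtain h₂ | ⟨t', ht', hft'⟩ := h₂
    · exact hs (.inr h₂)
    · exact Set.disjoint_left.mp hdisj ht (Option.some.inj (hft.symm.trans hft') ▸ ht')
  · exact fun hht => h₁ ⟨t, ht, hf₁.eq_some hht⟩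

variable {S} in
theorem glue_eq_some_iff_right (hf₂ : S.Ext f₂ h) (hdisj : Disjoint A A') (hs : s ∉ A ∪ A')
    (hcompat : (∃ t ∈ A, f₁ s = some t) → ∀ t ∈ A', f₂ s ≠ some t) (ht : t ∈ A') :
    f₂ s = some t ↔ glue A A' f₁ f₂ h s = some t := by
  by_cases h₁ : ∃ t ∈ A, f₁ s = some t
  · rw [glue, if_pos (.inr h₁)]
    obtain ⟨t₁, ht₁, hft₁⟩ := h₁
    refine iff_of_false (hcompat ⟨t₁, ht₁, hft₁⟩ t ht) fun hft => ?_
    rw [hft₁] at hft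
    exact Set.disjoint_left.mp hdisj ht₁ (Option.some.inj hft ▸ ht)
  rw [glue, if_neg (not_or.mpr ⟨fun h => hs (.inl h), h₁⟩)]
  by_cases h₂ : ∃ t ∈ A', f₂ s = some t
  · rw [if_pos (.inr h₂)]
  · rw [if_neg (not_or.mpr ⟨fun h => hs (.inr h), h₂⟩)]
    exact iff_of_false (fun hft => h₂ ⟨t, ht, hft⟩) fun hht => h₂ ⟨t, ht, hf₂.eq_some hht⟩

theorem viewsOn_empty (hg : S.Sel S.V0 g) :
    S.viewsOn g ∅ X = {fun s w => s ∈ X ∧ w = .unk} := by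
  have hview (f : V → Option V) :
      (fun s w => s ∈ X ∧ S.view ∅ f s w) = fun s w => s ∈ X ∧ w = .unk := by
    funext s w
    rw [S.view_iff_eq_unk (Set.notMem_empty s) fun t ht => absurd ht (Set.notMem_empty t)]
  ext R
  simp only [viewsOn, hview, Set.mem_ofPred_eq, Set.mem_singleton_iff]
  exact ⟨fun ⟨_, _, hR⟩ => hR, fun hR => ⟨g, S.ext_self_of_sel hg, hR⟩⟩

theorem exists_view_iff_of_viewsOn_eq (hPX : S.viewsOn g P X = S.viewsOn h P X)
    (hf : S.Ext f g) : ∃ f₁, S.Ext f₁ h ∧ ∀ s ∈ X, ∀ w, S.view P f s w ↔ S.view P f₁ s w := by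
  obtain ⟨f₁, hf₁, hR⟩ : (fun s w => s ∈ X ∧ S.view P f s w) ∈ S.viewsOn h P X :=
    hPX ▸ ⟨f, hf, rfl⟩
  exact ⟨f₁, hf₁, fun s hs w => by simpa [hs] using congrFun (congrFun hR s) w⟩

theorem viewsOn_union_subset (hdisj : Disjoint A A') (hAA' : ∀ u ∈ A, ∀ t ∈ A', ¬ S.E u t)
    (hA'A : ∀ u ∈ A', ∀ t ∈ A, ¬ S.E u t) (hX : Disjoint X (A ∪ A'))
    (hXY : ∀ s ∈ X, s ∉ Y → ∀ t ∈ A', ¬ S.E s t)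
    (hA : S.viewsOn g A X = S.viewsOn h A X) (hA' : S.viewsOn g A' Y = S.viewsOn h A' Y) :
    S.viewsOn g (A ∪ A') X ⊆ S.viewsOn h (A ∪ A') X := by
  rintro _ ⟨f, hf, rfl⟩
  obtain ⟨f₁, hf₁, hv₁⟩ := S.exists_view_iff_of_viewsOn_eq hA hf
  obtain ⟨f₂, hf₂, hv₂⟩ := S.exists_view_iff_of_viewsOn_eq hA' hf
  have hf' : S.Ext (glue A A' f₁ f₂ h) h := ext_glue hf₁ hf₂
  refine ⟨_, hf', funext fun s => funext fun w => propext (and_congr_right fun hs => ?_)⟩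
  have hs' : s ∉ A ∪ A' := Set.disjoint_left.mp hX hs
  have hsA : s ∉ A := fun h => hs' (.inl h)
  have hsA' : s ∉ A' := fun h => hs' (.inr h)
  refine S.view_union_congr hf.1 hf'.1 hAA' hA'A hs' (fun w => (hv₁ s hs w).trans ?_) fun w => ?_
  · exact S.view_congr hsA (fun u hu => (glue_of_mem_left hu).symm)
      fun t ht => glue_eq_some_iff_left hf₁ hdisj hs' ht
  by_cases hsY : s ∈ Y
  · have hcompat : (∃ t ∈ A, f₁ s = some t) → ∀ t ∈ A', f₂ s ≠ some t := fun h₁ t ht hft => by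
      obtain ⟨u₁, hu₁, hfu₁⟩ := (S.exists_first_iff_of_view_iff hsA (hv₁ s hs)).mpr h₁
      obtain ⟨u₂, hu₂, hfu₂⟩ :=
        (S.exists_first_iff_of_view_iff hsA' (hv₂ s hsY)).mpr ⟨t, ht, hft⟩
      exact Set.disjoint_left.mp hdisj hu₁ (Option.some.inj (hfu₁.symm.trans hfu₂) ▸ hu₂)
    exact (hv₂ s hsY w).trans (S.view_congr hsA'
      (fun u hu => (S.glue_of_mem_right hf₁.1 hdisj hA'A hu).symm)
      fun t ht => glue_eq_some_iff_right hf₂ hdisj hs' hcompat ht)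
  · rw [S.view_iff_eq_unk hsA' fun t ht hft => hXY s hs hsY t ht (hf.1 s t hft).2,
      S.view_iff_eq_unk hsA' fun t ht hft => hXY s hs hsY t ht (hf'.1 s t hft).2]

theorem psiLe_eq_of_not_crit (hnc : ¬ S.Crit i) : S.psiLe i = S.psiLe (i - 1) := by
  have hsub : S.psiLe (i - 1) ⊆ S.psiLe i := fun _ ⟨j, hj1, hj, hs⟩ => ⟨j, hj1, by omega, hs⟩
  by_contra hne
  exact hnc (compl_lt_compl_iff_lt.mpr (hsub.ssubset_of_ne (Ne.symm hne)))

theorem omega_eq_of_up [Nontrivial 𝒱] (hT : S.T.IsTree) (hD : IsDFT S.T S.root S.len S.vs)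
    (h1 : 1 ≤ i) (hi : i < S.len) (hba : Anc S.T S.root (S.vs (i + 1)) (S.vs i))
    (hψ : S.psiLe i = S.psiLe (i - 1)) (hg : S.Sel S.V0 g) (hh : S.Sel S.V0 h)
    (hyp : ∀ x ∈ S.theta (i + 1), S.omega g (i + 1) x = S.omega h (i + 1) x)
    (hx : x ∈ S.theta i) : S.omega g i x = S.omega h i x := by
  simp only [omega_eq_viewsOn] at hyp ⊢
  by_cases hxb : Anc S.T S.root x (S.vs (i + 1))
  · have hsame : S.psiGtAt (i + 1) x = S.psiGtAt i x := psiGtAt_succ_of_up h1 hba hψ x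
    rw [← hsame]
    exact hyp x hxb
  · obtain rfl : x = S.vs i := by
      by_contra hxa
      exact hxb (anc_of_anc_child hT hba (hD.adj i h1 hi).symm hx hxa)
    have hempty : S.psiGtAt i (S.vs i) = ∅ := psiGtAt_eq_empty_of_up hT hD h1 hi hba hψ
    rw [hempty, S.viewsOn_empty hg, S.viewsOn_empty hh]

theorem not_edge_of_no_common_bag (hE : ∀ s t, S.E s t → ∃ x, s ∈ S.B x ∧ t ∈ S.B x)
    {u t : V} (h : ∀ z, u ∈ S.B z → t ∉ S.B z) : ¬ S.E u t ∧ ¬ S.E t u :=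
  ⟨fun he => let ⟨z, hu, ht⟩ := hE u t he; h z hu ht,
    fun he => let ⟨z, ht, hu⟩ := hE t u he; h z hu ht⟩

theorem omega_subset_of_down (hTD : IsTreeDecomp S.E S.T S.B)
    (hd : IsDownStep S.T S.root S.vs i) (hψ : S.psiLe i = S.psiLe (i - 1))
    (hyp : ∀ x ∈ S.theta (i + 1), S.omega g (i + 1) x = S.omega h (i + 1) x) :
    S.omega g i (S.vs i) ⊆ S.omega h i (S.vs i) := by
  obtain ⟨hT, hE, hconn⟩ := hTD
  have hsplit : S.psiGtAt i (S.vs i) =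
      S.psiGtAt (i + 1) (S.vs i) ∪ S.psiGtAt (i + 1) (S.vs (i + 1)) :=
    hd.psiGtAt_eq_union hT hψ
  simp only [omega_eq_viewsOn, hsplit] at hyp ⊢
  refine S.viewsOn_union_subset (hd.disjoint_psiGtAt hT)
    (fun u hu t ht => (S.not_edge_of_no_common_bag hE fun _ =>
      hd.notMem_bag_of_mem_psiGtAt hT hu ht).1)
    (fun u hu t ht => (S.not_edge_of_no_common_bag hE fun _ =>
      hd.notMem_bag_of_mem_psiGtAt hT ht hu).2)
    (Set.disjoint_union_right.mpr
      ⟨disjoint_bag_psiGtAt hd.one_le _, disjoint_bag_psiGtAt hd.one_le _⟩)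
    (fun s hs hsb t ht => (S.not_edge_of_no_common_bag hE fun _ =>
      hd.notMem_bag_of_notMem_bag_succ hT (hconn s) hs hsb ht).1)
    (hyp _ hd.anc) (hyp _ (anc_self _))

theorem omega_eq_of_down (hTD : IsTreeDecomp S.E S.T S.B) (hd : IsDownStep S.T S.root S.vs i)
    (hψ : S.psiLe i = S.psiLe (i - 1))
    (hyp : ∀ x ∈ S.theta (i + 1), S.omega g (i + 1) x = S.omega h (i + 1) x)
    (hx : x ∈ S.theta i) : S.omega g i x = S.omega h i x := by
  by_cases hxa : x = S.vs i
  · subst hxa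
    exact (S.omega_subset_of_down hTD hd hψ hyp).antisymm
      (S.omega_subset_of_down hTD hd hψ fun x hx => (hyp x hx).symm)
  · have hsame : S.psiGtAt (i + 1) x = S.psiGtAt i x := hd.psiGtAt_succ_eq hTD.1 hψ hx hxa
    simp only [omega_eq_viewsOn, ← hsame] at hyp ⊢
    exact hyp x (anc_trans hx hd.anc)

end Setting

theorem omega_last_and_noncritical_general {V : Type u} {𝒱 : Type v}
    [Fintype V] [DecidableEq V]
    (S : Setting V 𝒱) (hS : S.Standing) (hV : 2 ≤ Fintype.card V) :
    (∀ g : V → Option V, S.Sel S.V0 g → ∀ x ∈ S.theta S.len,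
      S.omega g S.len x =
        {fun (s : V) (w : View V) => s ∈ S.B x ∧ w = View.unk}) ∧
    (∀ i : ℕ, 1 ≤ i → i ≤ S.len - 1 → ¬ S.Crit i →
      ∀ g h : V → Option V, S.Sel S.V0 g → S.Sel S.V0 h →
        (∀ x ∈ S.theta (i + 1), S.omega g (i + 1) x = S.omega h (i + 1) x) →
        ∀ x ∈ S.theta i, S.omega g i x = S.omega h i x) := by
  obtain ⟨-, ⟨hTD, -, hleaf, -⟩, hD, -⟩ := hS
  have hbag (s : V) : ∃ z, S.B z = {s} := (hleaf s).imp fun _ h => h.2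
  have : Nontrivial V := Fintype.one_lt_card_iff_nontrivial.mp hV
  have : Nontrivial 𝒱 := nontrivial_of_singleton_bags hbag
  refine ⟨fun g hg x _ => ?_, fun i h1 hi hnc g h hg hh hyp x hx => ?_⟩
  · have hall (s : V) : s ∈ S.psiLe (S.len - 1) := by
      obtain ⟨z, hz⟩ := hbag s
      obtain ⟨k, hk1, hkℓ, rfl⟩ := hD.exists_visit hTD.1 z
      exact mem_psiLe hk1 (by omega) (hz ▸ Finset.mem_singleton_self s)
    have hempty : S.psiGtAt S.len x = ∅ := psiGtAt_eq_empty hall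
    rw [S.omega_eq_viewsOn, hempty, S.viewsOn_empty hg]
    rfl
  · have hiℓ : i < S.len := by
      have := hD.one_le
      omega
    have hψ := S.psiLe_eq_of_not_crit hnc
    rcases anc_or_anc_of_adj hTD.1 (hD.adj i h1 hiℓ) with hab | hba
    · exact S.omega_eq_of_down hTD (hD.isDownStep hTD.1 h1 hiℓ hab) hψ hyp hx
    · exact S.omega_eq_of_up hTD.1 hD h1 hiℓ hba hψ hg hh hyp hx

/-- (i) Every `ω_ℓ^g(x)` is the singleton consisting of the
constant function `s ↦ ?` on `B x`; (ii) for non-critical `i ≤ ℓ - 1`, the views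
`ω_i` are determined by the views `ω_{i+1}`. -/
theorem omega_last_and_noncritical {V : Type u} {𝒱 : Type v}
    [Fintype V] [DecidableEq V] [Fintype 𝒱]
    (S : Setting V 𝒱) (hS : S.Standing) (hV : 2 ≤ Fintype.card V) :
    (∀ g : V → Option V, S.Sel S.V0 g → ∀ x ∈ S.theta S.len,
      S.omega g S.len x =
        {fun (s : V) (w : View V) => s ∈ S.B x ∧ w = View.unk}) ∧
    (∀ i : ℕ, 1 ≤ i → i ≤ S.len - 1 → ¬ S.Crit i →
      ∀ g h : V → Option V, S.Sel S.V0 g → S.Sel S.V0 h →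
        (∀ x ∈ S.theta (i + 1), S.omega g (i + 1) x = S.omega h (i + 1) x) →
        ∀ x ∈ S.theta i, S.omega g i x = S.omega h i x) :=
  omega_last_and_noncritical_general S hS hV
end

section
/- Let V be a set and E a binary relation on V that is acyclic, i.e., no x ∈ V satisfies x E⁺ x where E⁺ is the transitive closure of E. Let (s,t) be a pair with s E t, and let E′ be the relation obtained from E by removing the pair (s,t). Writing Reach(a,b) for the statement that b lies in the reflexive–transitive closure of E from a, and Reach′(a,b) for the same with E′, the following holds for all u,v ∈ V: Reach′(u,v) if and only if Reach(u,v) and, in addition, at least one of the following holds: (1) Reach(v,s); (2) Reach(u,s) fails; (3) there exist x,y ∈ V with x E y, (x,y) ≠ (s,t), Reach(u,x), Reach(y,v), Reach(x,s), and not Reach(y,s). -/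
/-!
Deleting `(s, t)` only destroys paths that use it, and a path from `u` to `v` through `(s, t)`
passes through `s`. If `s` is reachable from `v`, no such path exists: it would close the cycle
`s → t →* v →* s`. If `s` is unreachable from `u`, no path from `u` meets `s` at all.
Otherwise some `E ∖ {(s, t)}`-path leaves the set of vertices that reach `s`; its crossing
edge is the `(x, y)` of (3). Conversely, such an edge splits a path into a part that keeps
reaching `s` and a part that never meets `s` again, and neither part can use `(s, t)`.
-/

universe u

namespace Relation

variable {α : Type*} {r : α → α → Prop} {a b : α}

theorem ReflTransGen.restrict_of_forall_edge {p : α → α → Prop} (h : ReflTransGen r a b)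
    (hp : ∀ x y, ReflTransGen r a x → r x y → ReflTransGen r y b → p x y) :
    ReflTransGen (fun x y => r x y ∧ p x y) a b := by
  induction h using ReflTransGen.head_induction_on with
  | refl => rfl
  | @head a c hac hcb ih =>
    exact .head ⟨hac, hp a c .refl hac hcb⟩
      (ih fun x y hcx hxy hyb => hp x y (hcx.head hac) hxy hyb)

theorem ReflTransGen.exists_boundary_edge {P : α → Prop} (h : ReflTransGen r a b)
    (ha : P a) (hb : ¬ P b) :
    ∃ x y, ReflTransGen r a x ∧ r x y ∧ ReflTransGen r y b ∧ P x ∧ ¬ P y := by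
  induction h with
  | refl => exact absurd ha hb
  | @tail c b hac hcb ih =>
    by_cases hc : P c
    · exact ⟨c, b, hac, hcb, .refl, hc, hb⟩
    · obtain ⟨x, y, hax, hxy, hyc, hx, hy⟩ := ih hc
      exact ⟨x, y, hax, hxy, hyc.tail hcb, hx, hy⟩

end Relation

open Relation

section DeleteEdge

variable {V : Type u} {E : V → V → Prop} {s t u v : V}

theorem reflTransGen_deleteEdge_of_reflTransGen_source
    (hacyc : ∀ x : V, ¬ TransGen E x x) (huv : ReflTransGen E u v) (hvs : ReflTransGen E v s) :
    ReflTransGen (fun a b => E a b ∧ ¬ (a = s ∧ b = t)) u v :=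
  huv.restrict_of_forall_edge fun _ _ _ hxy hyv ⟨hx, _⟩ =>
    hacyc s (TransGen.head' (hx ▸ hxy) (hyv.trans hvs))

theorem reflTransGen_deleteEdge_of_not_reflTransGen_source
    (huv : ReflTransGen E u v) (hus : ¬ ReflTransGen E u s) :
    ReflTransGen (fun a b => E a b ∧ ¬ (a = s ∧ b = t)) u v :=
  huv.restrict_of_forall_edge fun _ _ hux _ _ ⟨hx, _⟩ => hus (hx ▸ hux)

end DeleteEdge

theorem reach_delete_edge_general {V : Type u} (E : V → V → Prop)
    (hacyc : ∀ x : V, ¬ Relation.TransGen E x x)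
    (s t : V) (u v : V) :
    Relation.ReflTransGen (fun a b => E a b ∧ ¬ (a = s ∧ b = t)) u v ↔
      (Relation.ReflTransGen E u v ∧
        (Relation.ReflTransGen E v s ∨ ¬ Relation.ReflTransGen E u s ∨
          ∃ x y : V, E x y ∧ ¬ (x = s ∧ y = t) ∧ Relation.ReflTransGen E u x ∧
            Relation.ReflTransGen E y v ∧ Relation.ReflTransGen E x s ∧
            ¬ Relation.ReflTransGen E y s)) := by
  have forget : ∀ {a b}, ReflTransGen (fun a b => E a b ∧ ¬ (a = s ∧ b = t)) a b →
      ReflTransGen E a b := ReflTransGen.mono (fun _ _ => And.left) _ _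
  constructor
  · intro huv
    refine ⟨forget huv, or_iff_not_imp_left.2 fun hvs => or_iff_not_imp_left.2 fun hus => ?_⟩
    obtain ⟨x, y, hux, ⟨hxy, hne⟩, hyv, hxs, hys⟩ :=
      huv.exists_boundary_edge (P := (ReflTransGen E · s)) (not_not.1 hus) hvs
    exact ⟨x, y, hxy, hne, forget hux, forget hyv, hxs, hys⟩
  · rintro ⟨huv, hvs | hus | ⟨x, y, hxy, hne, hux, hyv, hxs, hys⟩⟩
    · exact reflTransGen_deleteEdge_of_reflTransGen_source hacyc huv hvs
    · exact reflTransGen_deleteEdge_of_not_reflTransGen_source huv hus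
    · exact ((reflTransGen_deleteEdge_of_reflTransGen_source hacyc hux hxs).tail
        ⟨hxy, hne⟩).trans (reflTransGen_deleteEdge_of_not_reflTransGen_source hyv hys)

/-- Reachability after deleting the edge `(s, t)` from an acyclic
relation `E`: `v` is reachable from `u` in `E ∖ {(s,t)}` iff `v` is reachable from
`u` in `E` and moreover (1) `s` is reachable from `v`, or (2) `s` is not reachable
from `u`, or (3) there is an edge `(x, y) ≠ (s, t)` with `x` reachable from `u`,
`v` reachable from `y`, `s` reachable from `x` and `s` not reachable from `y`. -/
theorem reach_delete_edge {V : Type u} (E : V → V → Prop)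
    (hacyc : ∀ x : V, ¬ Relation.TransGen E x x)
    (s t : V) (hst : E s t) (u v : V) :
    Relation.ReflTransGen (fun a b => E a b ∧ ¬ (a = s ∧ b = t)) u v ↔
      (Relation.ReflTransGen E u v ∧
        (Relation.ReflTransGen E v s ∨ ¬ Relation.ReflTransGen E u s ∨
          ∃ x y : V, E x y ∧ ¬ (x = s ∧ y = t) ∧ Relation.ReflTransGen E u x ∧
            Relation.ReflTransGen E y v ∧ Relation.ReflTransGen E x s ∧
            ¬ Relation.ReflTransGen E y s)) :=
  reach_delete_edge_general E hacyc s t u v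
end

section
/- Let G=(V,E,c,V_0,V_1) be a parity game, let W ⊆ V, and for each σ ∈ W let f^σ be a V_0-selector that is winning for P_0 from σ, and let V^σ be the set of vertices occurring on some finite path starting at σ and compatible with f^σ. Fix a linear order ≤ on V. Define a partial map g as follows: for s ∈ ∪_{σ∈W} V^σ, let τ(s) be the ≤-least σ ∈ W with s ∈ V^σ, and set g(s) = f^{τ(s)}(s) if s ∈ dom(f^{τ(s)}), leaving g undefined at s otherwise; g is undefined outside ∪_{σ∈W} V^σ. Then g is a V_0-selector that is winning for P_0 from every σ ∈ W. -/
universe u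

/-- `p` is a (nonempty) finite path of the graph with edge relation `E`. -/
def FinPath {V : Type u} (E : V → V → Prop) (p : List V) : Prop :=
  p ≠ [] ∧ p.Chain' E

/-- The finite path `p` is compatible with the selector `f`: whenever a vertex of
`p` lies in the domain of `f`, the next vertex of `p` is prescribed by `f`. -/
def FinCompat {V : Type u} (f : V → Option V) (p : List V) : Prop :=
  ∀ j : ℕ, j + 1 < p.length → ∀ u : V, p[j]? = some u → ∀ t : V, f u = some t →
    p[j+1]? = some t

/-- The infinite play `ρ` is winning for `P₀`: the maximal color occurring
infinitely often along it is even. -/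
def InfWinning {V : Type u} (c : V → ℕ) (ρ : ℕ → V) : Prop :=
  ∃ m : ℕ, Even m ∧ (∀ N : ℕ, ∃ n : ℕ, N ≤ n ∧ c (ρ n) = m) ∧
    ∀ m' : ℕ, (∀ N : ℕ, ∃ n : ℕ, N ≤ n ∧ c (ρ n) = m') → m' ≤ m

/-- The selector `f` is winning for player `P₀` from `s0`: every maximal path
starting at `s0` and compatible with `f` is winning for `P₀` (a finite maximal
compatible path is winning iff its last vertex lies in `V1 = V0ᶜ`). -/
def SelWinFrom {V : Type u} (E : V → V → Prop) (V0 : Set V) (c : V → ℕ)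
    (f : V → Option V) (s0 : V) : Prop :=
  (∀ p : List V, FinPath E p → p.head? = some s0 → FinCompat f p →
    (¬ ∃ t : V, FinPath E (p ++ [t]) ∧ FinCompat f (p ++ [t])) →
    ∃ u : V, p.getLast? = some u ∧ u ∉ V0) ∧
  ∀ ρ : ℕ → V, ρ 0 = s0 → (∀ n : ℕ, E (ρ n) (ρ (n + 1))) →
    (∀ (n : ℕ) (t : V), f (ρ n) = some t → ρ (n + 1) = t) → InfWinning c ρ

/-!
One `g`-step from a vertex `s ∈ V^σ'` (some `σ' ∈ W`) is an `f^{τ(s)}`-step, so it stays in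
`V^{τ(s)}`; hence everything reachable by `g` from `σ ∈ W` is covered by the sets `V^σ'`. A vertex
`u` where a maximal `g`-path gets stuck is then also stuck for `f^{τ(u)}`, and it is reached by an
`f^{τ(u)}`-path from `τ(u)`, so `u ∈ V₁`. Along an infinite `g`-play the index `τ` can only
decrease, so, `V` being finite, it is eventually some constant `σ*`, after which the play follows
`f^{σ*}`. Prefixing an `f^{σ*}`-path from `σ*` to the current vertex gives an `f^{σ*}`-play from
`σ*`, which is winning and has the same tail.
-/

open Relation Filter

section Selectors

variable {V : Type u} {E : V → V → Prop} {f : V → Option V}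

def CompatStep (E : V → V → Prop) (f : V → Option V) (s t : V) : Prop :=
  E s t ∧ ∀ t' ∈ f s, t' = t

lemma compatStep_congr {g : V → Option V} {s : V} (h : f s = g s) (t : V) :
    CompatStep E f s t ↔ CompatStep E g s t := by
  simp only [CompatStep, h]

lemma finPath_iff {p : List V} : FinPath E p ↔ p ≠ [] ∧ p.IsChain E := Iff.rfl

lemma finCompat_iff_isChain {p : List V} :
    FinCompat f p ↔ p.IsChain fun s t => ∀ t' ∈ f s, t' = t := by
  simp only [FinCompat, List.isChain_iff_getElem, Option.mem_def]
  constructor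
  · intro h j hj t' ht'
    have := h j hj _ (List.getElem?_eq_getElem _) t' ht'
    rw [List.getElem?_eq_getElem hj, Option.some_inj] at this
    exact this.symm
  · intro h j hj u hu t ht
    rw [List.getElem?_eq_getElem (by omega)] at hu ⊢
    cases hu
    simp [h j hj t ht]

lemma finPath_and_finCompat_iff {p : List V} :
    FinPath E p ∧ FinCompat f p ↔ p ≠ [] ∧ p.IsChain (CompatStep E f) := by
  simp only [finPath_iff, finCompat_iff_isChain, List.isChain_iff_getElem, CompatStep,
    forall_and, and_assoc]

def reachSet (E : V → V → Prop) (f : V → Option V) (σ : V) : Set V :=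
  {z | ∃ p : List V, FinPath E p ∧ p.head? = some σ ∧ FinCompat f p ∧ z ∈ p}

lemma mem_reachSet_iff {σ z : V} :
    z ∈ reachSet E f σ ↔ ReflTransGen (CompatStep E f) σ z := by
  constructor
  · rintro ⟨p, hp, hhead, hc, hz⟩
    obtain ⟨-, hchain⟩ := finPath_and_finCompat_iff.1 ⟨hp, hc⟩
    obtain ⟨l, rfl⟩ := List.head?_eq_some_iff.1 hhead
    exact hchain.induction (ReflTransGen _ σ) _ (fun _ _ hxy hσx => hσx.tail hxy)
      (fun _ => .refl) z hz
  · intro h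
    obtain ⟨l, hchain, hlast⟩ := List.exists_isChain_cons_of_relationReflTransGen h
    obtain ⟨hp, hc⟩ := finPath_and_finCompat_iff.2 ⟨List.cons_ne_nil _ _, hchain⟩
    exact ⟨σ :: l, hp, rfl, hc, hlast ▸ List.getLast_mem _⟩

lemma exists_compat_extension_iff {p : List V} {u : V} (hp : FinPath E p)
    (hc : FinCompat f p) (hu : p.getLast? = some u) :
    (∃ t, FinPath E (p ++ [t]) ∧ FinCompat f (p ++ [t])) ↔ ∃ t, CompatStep E f u t := by
  have hchain := (finPath_and_finCompat_iff.1 ⟨hp, hc⟩).2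
  simp only [finPath_and_finCompat_iff, List.isChain_append, hchain, hu, ne_eq,
    List.append_eq_nil_iff, List.cons_ne_nil, and_false, not_false_eq_true, List.isChain_singleton,
    Option.mem_def, Option.some.injEq, List.head?_cons, forall_eq', true_and]

lemma selWinFrom_iff {V0 : Set V} {c : V → ℕ} {σ : V} :
    SelWinFrom E V0 c f σ ↔
      (∀ u, ReflTransGen (CompatStep E f) σ u → (∀ t, ¬ CompatStep E f u t) → u ∉ V0) ∧
      ∀ ρ : ℕ → V, ρ 0 = σ → (∀ n, CompatStep E f (ρ n) (ρ (n + 1))) → InfWinning c ρ := by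
  have hplay : ∀ ρ : ℕ → V, (∀ n, CompatStep E f (ρ n) (ρ (n + 1))) ↔
      (∀ n, E (ρ n) (ρ (n + 1))) ∧ ∀ n t, f (ρ n) = some t → ρ (n + 1) = t := fun ρ => by
    simp only [CompatStep, forall_and, Option.mem_def, eq_comm]
  simp only [SelWinFrom, hplay, and_imp]
  refine and_congr_left' ⟨fun h u hreach hstuck => ?_, fun h p hp hhead hc hmax => ?_⟩
  · obtain ⟨l, hchain, hlast⟩ := List.exists_isChain_cons_of_relationReflTransGen hreach
    obtain ⟨hp, hc⟩ := finPath_and_finCompat_iff.2 ⟨List.cons_ne_nil _ _, hchain⟩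
    have hu : (σ :: l).getLast? = some u := hlast ▸ List.getLast?_eq_some_getLast _
    obtain ⟨u', hu', hu'V0⟩ := h (σ :: l) hp rfl hc fun hext =>
      let ⟨t, ht⟩ := (exists_compat_extension_iff hp hc hu).1 hext
      hstuck t ht
    obtain rfl : u = u' := Option.some_inj.1 (hu.symm.trans hu')
    exact hu'V0
  · obtain ⟨u, hu⟩ := Option.isSome_iff_exists.1 (List.getLast?_isSome.2 hp.1)
    refine ⟨u, hu, h u (mem_reachSet_iff.1 ⟨p, hp, hhead, hc, List.mem_of_getLast? hu⟩) ?_⟩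
    exact fun t ht => hmax ((exists_compat_extension_iff hp hc hu).2 ⟨t, ht⟩)

end Selectors

section Plays

variable {V : Type u}

lemma reflTransGen_of_forall_succ {R : V → V → Prop} {ρ : ℕ → V}
    (hρ : ∀ n, R (ρ n) (ρ (n + 1))) (n : ℕ) : ReflTransGen R (ρ 0) (ρ n) := by
  induction n with
  | zero => exact .refl
  | succ n ih => exact ih.tail (hρ n)

lemma exists_play_of_reflTransGen {R : V → V → Prop} {a : V} {ρ : ℕ → V}
    (ha : ReflTransGen R a (ρ 0)) (hρ : ∀ n, R (ρ n) (ρ (n + 1))) :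
    ∃ (ρ' : ℕ → V) (K : ℕ), ρ' 0 = a ∧ (∀ n, R (ρ' n) (ρ' (n + 1))) ∧
      ∀ n, ρ' (n + K) = ρ n := by
  induction ha using ReflTransGen.head_induction_on with
  | refl => exact ⟨ρ, 0, rfl, hρ, fun _ => rfl⟩
  | head hab _ ih =>
    obtain ⟨ρ', K, h0, hρ', hK⟩ := ih
    refine ⟨fun | 0 => _ | n + 1 => ρ' n, K + 1, rfl, ?_, hK⟩
    rintro (_ | n)
    · show R _ (ρ' 0)
      rwa [h0]
    · exact hρ' n

lemma infWinning_comp_add_iff {c : V → ℕ} {ρ : ℕ → V} (k : ℕ) :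
    InfWinning c (fun n => ρ (n + k)) ↔ InfWinning c ρ := by
  have hfreq : ∀ m, (∀ N, ∃ n, N ≤ n ∧ c (ρ (n + k)) = m) ↔ ∀ N, ∃ n, N ≤ n ∧ c (ρ n) = m := by
    intro m
    have := frequently_map (f := atTop) (m := (· + k)) (P := fun n => c (ρ n) = m)
    rw [map_add_atTop_eq_nat, frequently_atTop, frequently_atTop] at this
    exact this.symm
  simp only [InfWinning, hfreq]

lemma infWinning_of_eventually {R : V → V → Prop} {c : V → ℕ} {r : V} {ρ : ℕ → V} {N : ℕ}
    (hwin : ∀ ρ' : ℕ → V, ρ' 0 = r → (∀ n, R (ρ' n) (ρ' (n + 1))) → InfWinning c ρ')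
    (hr : ReflTransGen R r (ρ N)) (hρ : ∀ n, N ≤ n → R (ρ n) (ρ (n + 1))) :
    InfWinning c ρ := by
  obtain ⟨ρ', K, h0, hρ', hK⟩ := exists_play_of_reflTransGen (ρ := fun n => ρ (n + N))
    (by simpa using hr) fun n => by simpa [add_right_comm] using hρ (n + N) (by omega)
  have hshift : (fun n => ρ (n + N)) = fun n => ρ' (n + K) := funext fun n => (hK n).symm
  rw [← infWinning_comp_add_iff N, hshift, infWinning_comp_add_iff]
  exact hwin ρ' h0 hρ'

end Plays

structure IsGluing {V : Type u} [LinearOrder V] (E : V → V → Prop) (W : Set V)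
    (fsel : V → V → Option V) (Vset : V → Set V) (τ : V → V) (g : V → Option V) : Prop where
  vset_eq : ∀ σ ∈ W, Vset σ = reachSet E (fsel σ) σ
  tau_spec : ∀ s : V, (∃ σ ∈ W, s ∈ Vset σ) →
    τ s ∈ W ∧ s ∈ Vset (τ s) ∧ ∀ σ ∈ W, s ∈ Vset σ → τ s ≤ σ
  eq_fsel : ∀ s : V, (∃ σ ∈ W, s ∈ Vset σ) → g s = fsel (τ s) s

namespace IsGluing

variable {V : Type u} [LinearOrder V] {E : V → V → Prop} {V0 : Set V} {c : V → ℕ} {W : Set V}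
  {fsel : V → V → Option V} {Vset : V → Set V} {τ : V → V} {g : V → Option V}
  (hG : IsGluing E W fsel Vset τ g)
include hG

lemma mem_self {σ : V} (hσ : σ ∈ W) : σ ∈ Vset σ := by
  rw [hG.vset_eq σ hσ]
  exact mem_reachSet_iff.2 .refl

lemma mem_of_compatStep {s t : V} (hs : ∃ σ ∈ W, s ∈ Vset σ) (hst : CompatStep E g s t) :
    t ∈ Vset (τ s) := by
  obtain ⟨hτW, hsτ, -⟩ := hG.tau_spec s hs
  rw [hG.vset_eq _ hτW, mem_reachSet_iff] at hsτ ⊢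
  exact hsτ.tail ((compatStep_congr (hG.eq_fsel s hs) t).1 hst)

lemma tau_le_of_compatStep {s t : V} (hs : ∃ σ ∈ W, s ∈ Vset σ) (hst : CompatStep E g s t) :
    τ t ≤ τ s :=
  (hG.tau_spec t ⟨_, (hG.tau_spec s hs).1, hG.mem_of_compatStep hs hst⟩).2.2 _
    (hG.tau_spec s hs).1 (hG.mem_of_compatStep hs hst)

lemma covered_of_reflTransGen {σ u : V} (hσ : σ ∈ W) (h : ReflTransGen (CompatStep E g) σ u) :
    ∃ σ' ∈ W, u ∈ Vset σ' := by
  induction h with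
  | refl => exact ⟨σ, hσ, hG.mem_self hσ⟩
  | tail _ hst ih => exact ⟨_, (hG.tau_spec _ ih).1, hG.mem_of_compatStep ih hst⟩

lemma notMem_of_stuck (hwin : ∀ σ ∈ W, SelWinFrom E V0 c (fsel σ) σ) {σ u : V} (hσ : σ ∈ W)
    (hu : ReflTransGen (CompatStep E g) σ u) (hstuck : ∀ t, ¬ CompatStep E g u t) : u ∉ V0 := by
  have hcov := hG.covered_of_reflTransGen hσ hu
  obtain ⟨hτW, huτ, -⟩ := hG.tau_spec u hcov
  rw [hG.vset_eq _ hτW, mem_reachSet_iff] at huτ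
  refine (selWinFrom_iff.1 (hwin _ hτW)).1 u huτ fun t ht => hstuck t ?_
  rwa [compatStep_congr (hG.eq_fsel u hcov)]

lemma infWinning [Finite V] (hwin : ∀ σ ∈ W, SelWinFrom E V0 c (fsel σ) σ) {σ : V} (hσ : σ ∈ W)
    {ρ : ℕ → V} (h0 : ρ 0 = σ) (hρ : ∀ n, CompatStep E g (ρ n) (ρ (n + 1))) :
    InfWinning c ρ := by
  have hcov n : ∃ σ' ∈ W, ρ n ∈ Vset σ' :=
    hG.covered_of_reflTransGen hσ (h0 ▸ reflTransGen_of_forall_succ hρ n)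
  obtain ⟨N, hN⟩ := WellFoundedLT.antitone_chain_condition (f := fun n => τ (ρ n))
    (antitone_nat_of_succ_le fun n => hG.tau_le_of_compatStep (hcov n) (hρ n))
  obtain ⟨hτW, hρN, -⟩ := hG.tau_spec (ρ N) (hcov N)
  rw [hG.vset_eq _ hτW, mem_reachSet_iff] at hρN
  refine infWinning_of_eventually (selWinFrom_iff.1 (hwin _ hτW)).2 hρN fun n hn => ?_
  rw [hN n hn, ← compatStep_congr (hG.eq_fsel _ (hcov n))]
  exact hρ n

end IsGluing

theorem uniform_winning_selector_general {V : Type u} [Fintype V] [LinearOrder V]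
    (E : V → V → Prop) (V0 : Set V) (c : V → ℕ)
    (W : Set V) (fsel : V → V → Option V)
    (hsel : ∀ σ ∈ W, (∀ s t : V, fsel σ s = some t → s ∈ V0 ∧ E s t) ∧
      SelWinFrom E V0 c (fsel σ) σ)
    (Vset : V → Set V)
    (hVset : ∀ σ ∈ W, Vset σ = {z | ∃ p : List V, FinPath E p ∧ p.head? = some σ ∧
      FinCompat (fsel σ) p ∧ z ∈ p})
    (τ : V → V)
    (hτ : ∀ s : V, (∃ σ ∈ W, s ∈ Vset σ) →
      τ s ∈ W ∧ s ∈ Vset (τ s) ∧ ∀ σ ∈ W, s ∈ Vset σ → τ s ≤ σ)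
    (g : V → Option V)
    (hg1 : ∀ s : V, (∃ σ ∈ W, s ∈ Vset σ) → g s = fsel (τ s) s)
    (hg2 : ∀ s : V, ¬ (∃ σ ∈ W, s ∈ Vset σ) → g s = none) :
    (∀ s t : V, g s = some t → s ∈ V0 ∧ E s t) ∧
      ∀ σ ∈ W, SelWinFrom E V0 c g σ := by
  have hG : IsGluing E W fsel Vset τ g := ⟨hVset, hτ, hg1⟩
  have hwin σ (hσ : σ ∈ W) : SelWinFrom E V0 c (fsel σ) σ := (hsel σ hσ).2
  refine ⟨fun s t hst => ?_, fun σ hσ => selWinFrom_iff.2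
    ⟨fun u hu hstuck => hG.notMem_of_stuck hwin hσ hu hstuck,
      fun ρ h0 hρ => hG.infWinning hwin hσ h0 hρ⟩⟩
  have hs : ∃ σ ∈ W, s ∈ Vset σ := by
    by_contra h
    simp [hg2 s h] at hst
  rw [hg1 s hs] at hst
  exact (hsel _ (hτ s hs).1).1 s t hst

/-- Gluing non-uniform winning selectors `f^σ` (for `σ` in a set
`W` of winning vertices) along the ≤-least index `τ(s)` with `s ∈ V^{τ(s)}` yields a
single `V₀`-selector `g` that is winning for `P₀` from every `σ ∈ W`. -/
theorem uniform_winning_selector {V : Type u} [Fintype V] [LinearOrder V]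
    (E : V → V → Prop) (V0 : Set V) (c : V → ℕ) (C : ℕ)
    (hc : ∀ s : V, 1 ≤ c s ∧ c s ≤ C)
    (W : Set V) (fsel : V → V → Option V)
    (hsel : ∀ σ ∈ W, (∀ s t : V, fsel σ s = some t → s ∈ V0 ∧ E s t) ∧
      SelWinFrom E V0 c (fsel σ) σ)
    (Vset : V → Set V)
    (hVset : ∀ σ ∈ W, Vset σ = {z | ∃ p : List V, FinPath E p ∧ p.head? = some σ ∧
      FinCompat (fsel σ) p ∧ z ∈ p})
    (τ : V → V)
    (hτ : ∀ s : V, (∃ σ ∈ W, s ∈ Vset σ) →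
      τ s ∈ W ∧ s ∈ Vset (τ s) ∧ ∀ σ ∈ W, s ∈ Vset σ → τ s ≤ σ)
    (g : V → Option V)
    (hg1 : ∀ s : V, (∃ σ ∈ W, s ∈ Vset σ) → g s = fsel (τ s) s)
    (hg2 : ∀ s : V, ¬ (∃ σ ∈ W, s ∈ Vset σ) → g s = none) :
    (∀ s t : V, g s = some t → s ∈ V0 ∧ E s t) ∧
      ∀ σ ∈ W, SelWinFrom E V0 c g σ :=
  uniform_winning_selector_general E V0 c W fsel hsel Vset hVset τ hτ g hg1 hg2
end
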